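/- Let μ be the shift-invariant Markov measure on X^ℕ defined by an irreducible stochastic matrix L with stationary probability vector l, and let g : X^ℕ → X^ℕ be an invertible transformation generated by an L-strongly connected Mealy automaton A = (X, S, π, λ). Suppose t = k ⊗ l, where t is the stationary probability vector of T = T_{L,A} and k is the stationary probability vector of K = K_{l,A}. Then either μ and g_*μ are mutually singular, or g_*μ = μ. -/

import Mathlib

open MeasureTheory Filter Topology
open scoped ENNReal

namespace AutoMarkov

variable {X : Type*} {S : Type*}

/-- The cylinder set of sequences starting with the finite word `w`. -/
def cylinder (w : List X) : Set (ℕ → X) :=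
  {ω | ∀ i : Fin w.length, ω i = w.get i}

/-- Product of transition probabilities `L x y₁ * L y₁ y₂ * ⋯` along a word. -/
noncomputable def chainWeight (L : X → X → ℝ≥0∞) : X → List X → ℝ≥0∞
  | _, [] => 1
  | x, y :: v => L x y * chainWeight L y v

/-- The Markov weight `l_{x₁} L_{x₁x₂} ⋯ L_{x_{n-1}x_n}` of a finite word. -/
noncomputable def cylWeight (l : X → ℝ≥0∞) (L : X → X → ℝ≥0∞) : List X → ℝ≥0∞
  | [] => 1
  | x :: v => l x * chainWeight L x v

/-- The one-sided shift on sequences. -/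
def shift : (ℕ → X) → ℕ → X := fun ω n => ω (n + 1)

/-- Extension of the transition function of a Mealy automaton to finite words. -/
def piExt (πf : S → X → S) : S → List X → S
  | s, [] => s
  | s, x :: w => piExt πf (πf s x) w

/-- Extension of the output function of a Mealy automaton to finite words. -/
def lamExt (πf : S → X → S) (lam : S → X → X) : S → List X → List X
  | _, [] => []
  | s, x :: w => lam s x :: lamExt πf lam (πf s x) w

/-- The action of the state `g` of a Mealy automaton on infinite sequences. -/
def autAct (πf : S → X → S) (lam : S → X → X) (g : S) : (ℕ → X) → ℕ → X :=
  fun ω n => lam (piExt πf g (List.ofFn fun i : Fin n => ω i)) (ω n)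

/-- The matrix `T = T_{L,A}` on `S × X`. -/
noncomputable def Tmat [DecidableEq S] (πf : S → X → S) (L : X → X → ℝ≥0∞) :
    S × X → S × X → ℝ≥0∞ :=
  fun p q => if πf p.1 p.2 = q.1 then L p.2 q.2 else 0

/-- The matrix `K = K_{l,A}` on `S`. -/
noncomputable def Kmat [Fintype X] [DecidableEq S] (πf : S → X → S) (l : X → ℝ≥0∞) :
    S → S → ℝ≥0∞ :=
  fun s₀ s₁ => ∑ x : X, if πf s₀ x = s₁ then l x else 0

/-- The automaton is strongly connected: any state is reachable from any state. -/
def StronglyConnected (πf : S → X → S) : Prop :=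
  ∀ s r : S, ∃ w : List X, piExt πf s w = r

/-- The automaton is `L`-strongly connected. -/
def LStronglyConnected (πf : S → X → S) (L : X → X → ℝ≥0∞) : Prop :=
  ∀ s r : S, ∀ x y : X, ∃ w : List X,
    piExt πf s (x :: w) = r ∧ chainWeight L x (w ++ [y]) ≠ 0

/-- Irreducibility of a stochastic matrix: positive-probability path between any
two symbols. -/
def IrreducibleMat (L : X → X → ℝ≥0∞) : Prop :=
  ∀ x y : X, ∃ v : List X, chainWeight L x (v ++ [y]) ≠ 0

/-- The automaton is reversible: every state has a unique `x`-predecessor. -/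
def Reversible (πf : S → X → S) : Prop :=
  ∀ (s : S) (x : X), ∃! s₀ : S, πf s₀ x = s

/-! ### ENNReal square-root preliminaries -/

noncomputable def sqE (a : ℝ≥0∞) : ℝ≥0∞ := a ^ (2⁻¹ : ℝ)

lemma sqE_mul (a b : ℝ≥0∞) : sqE (a * b) = sqE a * sqE b :=
  ENNReal.mul_rpow_of_nonneg _ _ (by norm_num)

lemma sqE_mul_self (a : ℝ≥0∞) : sqE a * sqE a = a := by
  rw [sqE, ← ENNReal.rpow_add_of_nonneg _ _ (by norm_num) (by norm_num)]
  norm_num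

lemma sqE_sq (a : ℝ≥0∞) : sqE (a * a) = a := by rw [sqE_mul, sqE_mul_self]

lemma sqE_one : sqE (1 : ℝ≥0∞) = 1 := by
  have := sqE_sq 1; simpa using this

lemma sqE_mono {a b : ℝ≥0∞} (h : a ≤ b) : sqE a ≤ sqE b :=
  ENNReal.rpow_le_rpow h (by norm_num)

lemma le_of_sq_le_sq {a b : ℝ≥0∞} (h : a * a ≤ b * b) : a ≤ b := by
  have := sqE_mono h
  rwa [sqE_sq, sqE_sq] at this

lemma lt_of_sq_lt_sq {a b : ℝ≥0∞} (h : a * a < b * b) : a < b := by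
  by_contra hc
  push_neg at hc
  exact absurd (mul_le_mul' hc hc) (not_le_of_gt h)

lemma two_mul_le_sq_add_sq (a b : ℝ≥0∞) : 2 * (a * b) ≤ a * a + b * b := by
  rcases le_total a b with h | h
  · obtain ⟨c, rfl⟩ := le_iff_exists_add.mp h
    have : 2 * (a * (a + c)) = a * a + (a * a + a * c + a * c) := by ring
    rw [this]
    have : a * a + (a + c) * (a + c) = a * a + (a * a + a * c + a * c + c * c) := by ring
    rw [this]
    exact add_le_add_right (le_add_right le_rfl) _
  · obtain ⟨c, rfl⟩ := le_iff_exists_add.mp h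
    have h1 : 2 * ((b + c) * b) = b * b + (b * b + b * c + b * c) := by ring
    rw [h1]
    have h2 : (b + c) * (b + c) + b * b = b * b + (b * b + b * c + b * c + c * c) := by ring
    rw [h2]
    exact add_le_add_right (le_add_right le_rfl) _

lemma two_mul_lt_sq_add_sq {a b : ℝ≥0∞} (hne : a ≠ b) (ha : a ≠ ∞) (hb : b ≠ ∞) :
    2 * (a * b) < a * a + b * b := by
  rcases le_total a b with h | h
  · obtain ⟨c, rfl⟩ := le_iff_exists_add.mp h
    have hc : c ≠ 0 := by rintro rfl; simp at hne
    have hcf : c ≠ ∞ := by intro h'; rw [h'] at hb; simp at hb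
    have h1 : a * a + (a + c) * (a + c) = 2 * (a * (a + c)) + c * c := by ring
    rw [h1]
    refine ENNReal.lt_add_right ?_ (by simpa using hc)
    exact ENNReal.mul_ne_top (by norm_num) (ENNReal.mul_ne_top ha hb)
  · obtain ⟨c, rfl⟩ := le_iff_exists_add.mp h
    have hc : c ≠ 0 := by rintro rfl; simp at hne
    have hcf : c ≠ ∞ := by intro h'; rw [h'] at ha; simp at ha
    have h1 : (b + c) * (b + c) + b * b = 2 * ((b + c) * b) + c * c := by ring
    rw [h1]
    refine ENNReal.lt_add_right ?_ (by simpa using hc)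
    exact ENNReal.mul_ne_top (by norm_num) (ENNReal.mul_ne_top ha hb)

lemma two_mul_sqE_le (a b : ℝ≥0∞) : 2 * sqE (a * b) ≤ a + b := by
  apply le_of_sq_le_sq
  have h1 : 2 * sqE (a * b) * (2 * sqE (a * b)) = 2 * 2 * (sqE (a * b) * sqE (a * b)) := by ring
  rw [h1, sqE_mul_self]
  have h2 : (a + b) * (a + b) = (a * a + b * b) + 2 * (a * b) := by ring
  rw [h2]
  have : (2 : ℝ≥0∞) * 2 * (a * b) = 2 * (a * b) + 2 * (a * b) := by ring
  rw [this]
  exact add_le_add_left (two_mul_le_sq_add_sq a b) _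

lemma two_mul_sqE_lt {a b : ℝ≥0∞} (hne : a ≠ b) (ha : a ≠ ∞) (hb : b ≠ ∞) :
    2 * sqE (a * b) < a + b := by
  apply lt_of_sq_lt_sq
  have h1 : 2 * sqE (a * b) * (2 * sqE (a * b)) = 2 * 2 * (sqE (a * b) * sqE (a * b)) := by ring
  rw [h1, sqE_mul_self]
  have h2 : (a + b) * (a + b) = (a * a + b * b) + 2 * (a * b) := by ring
  rw [h2]
  have h3 : (2 : ℝ≥0∞) * 2 * (a * b) = 2 * (a * b) + 2 * (a * b) := by ring
  rw [h3]
  exact ENNReal.add_lt_add_right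
    (ENNReal.mul_ne_top (by norm_num) (ENNReal.mul_ne_top ha hb))
    (two_mul_lt_sq_add_sq hne ha hb)

section rows
variable [Fintype X]

lemma sum_sqE_le_one {a b : X → ℝ≥0∞} (ha : ∑ x, a x = 1) (hb : ∑ x, b x = 1) :
    ∑ x, sqE (a x * b x) ≤ 1 := by
  have h2 : (∑ x, sqE (a x * b x)) * 2 ≤ 1 * 2 := by
    rw [Finset.sum_mul]
    calc ∑ x, sqE (a x * b x) * 2 = ∑ x, 2 * sqE (a x * b x) := by
          simp [mul_comm]
      _ ≤ ∑ x, (a x + b x) := Finset.sum_le_sum fun x _ => two_mul_sqE_le _ _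
      _ = 1 * 2 := by rw [Finset.sum_add_distrib, ha, hb]; norm_num
  exact (ENNReal.mul_le_mul_iff_left (by norm_num) (by norm_num)).mp h2

lemma row_defect {a b : X → ℝ≥0∞} (ha : ∑ x, a x = 1) (hb : ∑ x, b x = 1)
    {c : X} (hne : a c ≠ b c) :
    ∃ δ : ℝ≥0∞, δ ≠ 0 ∧ (∑ x, sqE (a x * b x)) + δ ≤ 1 := by
  classical
  have hat : a c ≠ ∞ := by
    intro h
    have : a c ≤ 1 := ha ▸ Finset.single_le_sum (fun x _ => zero_le) (Finset.mem_univ c)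
    rw [h] at this; simp at this
  have hbt : b c ≠ ∞ := by
    intro h
    have : b c ≤ 1 := hb ▸ Finset.single_le_sum (fun x _ => zero_le) (Finset.mem_univ c)
    rw [h] at this; simp at this
  have hstrict := two_mul_sqE_lt hne hat hbt
  set e : ℝ≥0∞ := (a c + b c) - 2 * sqE (a c * b c) with he_def
  have he0 : e ≠ 0 := by
    rw [he_def]
    simpa [tsub_eq_zero_iff_le] using not_le_of_gt hstrict
  have hesum : 2 * sqE (a c * b c) + e = a c + b c := add_tsub_cancel_of_le hstrict.le
  have hetop : e ≠ ∞ := by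
    have : e ≤ a c + b c := tsub_le_self
    intro h; rw [h] at this
    exact (ENNReal.add_ne_top.mpr ⟨hat, hbt⟩) (top_le_iff.mp this)
  refine ⟨e / 2, ?_, ?_⟩
  · simp [ENNReal.div_eq_zero_iff, he0]
  · have key : ((∑ x, sqE (a x * b x)) + e / 2) * 2 ≤ 1 * 2 := by
      have expand : ((∑ x, sqE (a x * b x)) + e / 2) * 2
          = (∑ x, 2 * sqE (a x * b x)) + e := by
        rw [add_mul, Finset.sum_mul]
        congr 1
        · simp [mul_comm]
        · rw [div_eq_mul_inv, mul_assoc, ENNReal.inv_mul_cancel (by norm_num) (by norm_num),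
            mul_one]
      rw [expand]
      have split1 : ∑ x, 2 * sqE (a x * b x)
          = (∑ x ∈ Finset.univ.erase c, 2 * sqE (a x * b x)) + 2 * sqE (a c * b c) := by
        rw [Finset.sum_erase_add _ _ (Finset.mem_univ c)]
      rw [split1, add_assoc, hesum]
      have split2 : (1 : ℝ≥0∞) * 2 = (∑ x ∈ Finset.univ.erase c, (a x + b x)) + (a c + b c) := by
        rw [Finset.sum_erase_add _ _ (Finset.mem_univ c), Finset.sum_add_distrib, ha, hb]
        norm_num
      rw [split2]
      exact add_le_add_left (Finset.sum_le_sum fun x _ => two_mul_sqE_le _ _) _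
    exact (ENNReal.mul_le_mul_iff_left (by norm_num) (by norm_num)).mp key

end rows
section chain
variable [Fintype X] {L : X → X → ℝ≥0∞} {l m : X → ℝ≥0∞}

lemma entry_le_of_row_sum_one (hL : ∀ x, ∑ y, L x y = 1) (x y : X) : L x y ≤ 1 :=
  (hL x) ▸ Finset.single_le_sum (fun _ _ => zero_le) (Finset.mem_univ y)

lemma le_one_of_sum_one (hm : ∑ x, m x = 1) (x : X) : m x ≤ 1 :=
  hm ▸ Finset.single_le_sum (fun _ _ => zero_le) (Finset.mem_univ x)

lemma ne_top_of_sum_one (hm : ∑ x, m x = 1) (x : X) : m x ≠ ∞ :=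
  fun h => by simpa [h] using le_one_of_sum_one hm x

lemma chainWeight_le_one (hL : ∀ x, ∑ y, L x y = 1) : ∀ (v : List X) (x : X),
    chainWeight L x v ≤ 1
  | [], _ => le_rfl
  | y :: v, x => by
      rw [chainWeight]
      exact mul_le_one' (entry_le_of_row_sum_one hL x y) (chainWeight_le_one hL v y)

lemma stat_mul_le (hm : ∀ y, ∑ x, m x * L x y = m y) (x y : X) : m x * L x y ≤ m y :=
  (hm y) ▸ Finset.single_le_sum (f := fun x => m x * L x y) (fun _ _ => zero_le) (Finset.mem_univ x)

lemma stat_chain_le (hm : ∀ y, ∑ x, m x * L x y = m y) :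
    ∀ (v : List X) (x y : X), m x * chainWeight L x (v ++ [y]) ≤ m y
  | [], x, y => by
      rw [List.nil_append, chainWeight, chainWeight, mul_one]
      exact stat_mul_le hm x y
  | a :: v, x, y => by
      rw [List.cons_append, chainWeight, ← mul_assoc]
      calc m x * L x a * chainWeight L a (v ++ [y])
          ≤ m a * chainWeight L a (v ++ [y]) :=
            mul_le_mul_left (stat_mul_le hm x a) _
        _ ≤ m y := stat_chain_le hm v a y

lemma stat_pos (hm : ∀ y, ∑ x, m x * L x y = m y) (hm1 : ∑ x, m x = 1)
    (hirr : IrreducibleMat L) (y : X) : m y ≠ 0 := by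
  have hex : ∃ x, m x ≠ 0 := by
    by_contra h
    push_neg at h
    rw [Finset.sum_eq_zero (fun x _ => h x)] at hm1
    exact zero_ne_one hm1
  obtain ⟨x, hx⟩ := hex
  obtain ⟨v, hv⟩ := hirr x y
  intro hy
  have := stat_chain_le hm v x y
  rw [hy, le_zero_iff] at this
  exact (mul_ne_zero hx hv) this

end chain

section unique
variable [Fintype X] [DecidableEq X] {L : X → X → ℝ≥0∞} {l m : X → ℝ≥0∞}

noncomputable def Lpow (L : X → X → ℝ≥0∞) : ℕ → X → X → ℝ≥0∞
  | 0, x, y => if x = y then 1 else 0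
  | (n + 1), x, y => ∑ z, L x z * Lpow L n z y

lemma stat_Lpow (hm : ∀ y, ∑ x, m x * L x y = m y) :
    ∀ (n : ℕ) (y : X), ∑ x, m x * Lpow L n x y = m y
  | 0, y => by simp [Lpow, Finset.sum_ite_eq, mul_ite]
  | (n + 1), y => by
      simp only [Lpow]
      calc ∑ x, m x * ∑ z, L x z * Lpow L n z y
          = ∑ x, ∑ z, m x * L x z * Lpow L n z y := by
            simp [Finset.mul_sum, mul_assoc]
        _ = ∑ z, (∑ x, m x * L x z) * Lpow L n z y := by
            rw [Finset.sum_comm]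
            simp [Finset.sum_mul]
        _ = ∑ z, m z * Lpow L n z y := by simp [hm]
        _ = m y := stat_Lpow hm n y

lemma chain_le_Lpow : ∀ (v : List X) (x y : X),
    chainWeight L x (v ++ [y]) ≤ Lpow L (v.length + 1) x y
  | [], x, y => by
      rw [List.nil_append, chainWeight, chainWeight, mul_one]
      calc L x y = L x y * Lpow L 0 y y := by simp [Lpow]
        _ ≤ ∑ z, L x z * Lpow L 0 z y :=
            Finset.single_le_sum (f := fun z => L x z * Lpow L 0 z y)
              (fun _ _ => zero_le) (Finset.mem_univ y)
        _ = Lpow L 1 x y := rfl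
  | a :: v, x, y => by
      rw [List.cons_append, chainWeight]
      calc L x a * chainWeight L a (v ++ [y])
          ≤ L x a * Lpow L (v.length + 1) a y :=
            mul_le_mul_right (chain_le_Lpow v a y) _
        _ ≤ ∑ z, L x z * Lpow L (v.length + 1) z y :=
            Finset.single_le_sum (f := fun z => L x z * Lpow L (v.length + 1) z y)
              (fun _ _ => zero_le) (Finset.mem_univ a)
        _ = Lpow L (v.length + 1 + 1) x y := rfl

/-- Uniqueness of the stationary probability vector of an irreducible matrix. -/
lemma stationary_unique [Nonempty X]
    (hstat : ∀ y, ∑ x, l x * L x y = l y) (hl1 : ∑ x, l x = 1)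
    (hirr : IrreducibleMat L)
    (hmstat : ∀ y, ∑ x, m x * L x y = m y) (hm1 : ∑ x, m x = 1) : m = l := by
  have hlpos := fun y => stat_pos hstat hl1 hirr y
  have hltop := fun y => ne_top_of_sum_one hl1 y
  have hmtop := fun y => ne_top_of_sum_one hm1 y
  obtain ⟨y₀, -, hy₀⟩ := Finset.exists_min_image Finset.univ (fun y => m y / l y)
    Finset.univ_nonempty
  set c : ℝ≥0∞ := m y₀ / l y₀ with hc_def
  have hctop : c ≠ ∞ := by
    rw [hc_def]
    simp [ENNReal.div_eq_top, hlpos y₀, hmtop y₀]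
  have hpt : ∀ y, c * l y ≤ m y := by
    intro y
    have h1 : c ≤ m y / l y := hy₀ y (Finset.mem_univ y)
    rwa [ENNReal.le_div_iff_mul_le (Or.inl (hlpos y)) (Or.inl (hltop y))] at h1
  have hc0 : c * l y₀ = m y₀ := by
    rw [hc_def]
    exact ENNReal.div_mul_cancel (hlpos y₀) (hltop y₀)
  have hall : ∀ y, m y = c * l y := by
    intro y₁
    by_contra hy₁
    set e : ℝ≥0∞ := m y₁ - c * l y₁ with he_def
    have he0 : e ≠ 0 := by
      rw [he_def]
      simpa [tsub_eq_zero_iff_le] using fun hle => hy₁ (le_antisymm hle (hpt y₁))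
    have hesum : c * l y₁ + e = m y₁ := add_tsub_cancel_of_le (hpt y₁)
    obtain ⟨v, hv⟩ := hirr y₁ y₀
    set n := v.length + 1 with hn
    have hLp : Lpow L n y₁ y₀ ≠ 0 := by
      intro h
      exact hv (le_zero_iff.mp (h ▸ chain_le_Lpow v y₁ y₀))
    have hlower : (∑ x, (c * l x) * Lpow L n x y₀) + e * Lpow L n y₁ y₀
        ≤ ∑ x, m x * Lpow L n x y₀ := by
      calc (∑ x, (c * l x) * Lpow L n x y₀) + e * Lpow L n y₁ y₀
          = ∑ x, ((c * l x) * Lpow L n x y₀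
              + if x = y₁ then e * Lpow L n y₁ y₀ else 0) := by
            rw [Finset.sum_add_distrib]
            simp [Finset.sum_ite_eq', Finset.mem_univ]
        _ ≤ ∑ x, m x * Lpow L n x y₀ := by
            apply Finset.sum_le_sum
            intro x _
            by_cases hx : x = y₁
            · subst hx
              rw [if_pos rfl, ← add_mul, hesum]
            · simp only [if_neg hx, add_zero]
              exact mul_le_mul_left (hpt x) _
    rw [stat_Lpow hmstat n y₀] at hlower
    have hsum_c : ∑ x, (c * l x) * Lpow L n x y₀ = c * l y₀ := by
      calc ∑ x, (c * l x) * Lpow L n x y₀ = c * ∑ x, l x * Lpow L n x y₀ := by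
            rw [Finset.mul_sum]; simp [mul_assoc]
        _ = c * l y₀ := by rw [stat_Lpow hstat n y₀]
    rw [hsum_c, hc0] at hlower
    have : m y₀ < m y₀ + e * Lpow L n y₁ y₀ :=
      ENNReal.lt_add_right (hmtop y₀) (mul_ne_zero he0 hLp)
    exact absurd hlower (not_le_of_gt this)
  have hcsum : ∑ y, m y = c * ∑ y, l y := by
    rw [Finset.mul_sum]
    exact Finset.sum_congr rfl fun y _ => hall y
  rw [hm1, hl1, mul_one] at hcsum
  funext y
  rw [hall y, ← hcsum, one_mul]

end unique
lemma cylinder_nil : cylinder ([] : List X) = (Set.univ : Set (ℕ → X)) := by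
  ext ω
  simp [cylinder]

lemma mem_cylinder_cons (y : X) (w : List X) (ζ : ℕ → X) :
    ζ ∈ cylinder (y :: w) ↔ ζ 0 = y ∧ (fun n => ζ (n + 1)) ∈ cylinder w := by
  simp [cylinder, Fin.forall_fin_succ]

lemma mem_cylinder_ofFn : ∀ (n : ℕ) (f : Fin n → X) (ω : ℕ → X),
    ω ∈ cylinder (List.ofFn f) ↔ ∀ i : Fin n, ω i = f i
  | 0, f, ω => by simp [List.ofFn_zero, cylinder_nil]
  | (n + 1), f, ω => by
      rw [List.ofFn_succ, mem_cylinder_cons, mem_cylinder_ofFn n]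
      simp [Fin.forall_fin_succ]

section cyl
variable [Fintype X] [MeasurableSpace X] [MeasurableSingletonClass X]

lemma measurableSet_cylinder (w : List X) : MeasurableSet (cylinder w) := by
  have : cylinder w = ⋂ i : Fin w.length, (fun ω : ℕ → X => ω i) ⁻¹' {w.get i} := by
    ext ω
    simp [cylinder, Set.mem_iInter]
  rw [this]
  exact MeasurableSet.iInter fun i =>
    (measurable_pi_apply (i : ℕ)) (measurableSet_singleton _)

lemma measurableSet_gen_coord (i : ℕ) (x : X) :
    MeasurableSet[MeasurableSpace.generateFrom
      {C : Set (ℕ → X) | ∃ w : List X, C = cylinder w}] {ω : ℕ → X | ω i = x} := by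
  have heq : {ω : ℕ → X | ω i = x}
      = ⋃ (f : Fin (i + 1) → X) (_ : f (Fin.last i) = x), cylinder (List.ofFn f) := by
    ext ω
    simp only [Set.mem_setOf_eq, Set.mem_iUnion]
    constructor
    · intro h
      refine ⟨fun j => ω j, ?_, ?_⟩
      · simpa [Fin.val_last] using h
      · rw [mem_cylinder_ofFn]
        intro j
        rfl
    · rintro ⟨f, hf, hmem⟩
      rw [mem_cylinder_ofFn] at hmem
      have := hmem (Fin.last i)
      simpa [Fin.val_last, hf] using this
  rw [heq]
  exact MeasurableSet.iUnion fun f => MeasurableSet.iUnion fun hf =>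
    MeasurableSpace.GenerateMeasurable.basic _ ⟨List.ofFn f, rfl⟩

lemma pi_eq_gen : (inferInstance : MeasurableSpace (ℕ → X)) =
    MeasurableSpace.generateFrom {C : Set (ℕ → X) | ∃ w : List X, C = cylinder w} := by
  apply le_antisymm
  · have hev : ∀ i : ℕ, @Measurable (ℕ → X) X (MeasurableSpace.generateFrom
        {C : Set (ℕ → X) | ∃ w : List X, C = cylinder w}) _ (fun ω : ℕ → X => ω i) :=
      fun i => @measurable_to_countable' X (ℕ → X) _ _ (MeasurableSpace.generateFrom
        {C : Set (ℕ → X) | ∃ w : List X, C = cylinder w}) _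
        (fun x => measurableSet_gen_coord i x)
    have hid : @Measurable (ℕ → X) (ℕ → X) (MeasurableSpace.generateFrom
        {C : Set (ℕ → X) | ∃ w : List X, C = cylinder w}) MeasurableSpace.pi
        (fun ω : ℕ → X => ω) :=
      @measurable_pi_iff (ℕ → X) ℕ (fun _ => X) (MeasurableSpace.generateFrom
        {C : Set (ℕ → X) | ∃ w : List X, C = cylinder w}) _ (fun ω => ω) |>.mpr hev
    intro s hs
    exact hid hs
  · exact MeasurableSpace.generateFrom_le (by rintro C ⟨w, rfl⟩; exact measurableSet_cylinder w)

lemma cylinder_inter_of_le {w1 w2 : List X} (hlen : w1.length ≤ w2.length)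
    (hne : (cylinder w1 ∩ cylinder w2 : Set (ℕ → X)).Nonempty) :
    (cylinder w1 ∩ cylinder w2 : Set (ℕ → X)) = cylinder w2 := by
  obtain ⟨ω, hω1, hω2⟩ := hne
  refine Set.inter_eq_self_of_subset_right ?_
  intro ζ hζ i
  have hi2 : (i : ℕ) < w2.length := lt_of_lt_of_le i.2 hlen
  have e1 : ω i = w1.get i := hω1 i
  have e2 : ω i = w2.get ⟨i, hi2⟩ := hω2 ⟨i, hi2⟩
  have e3 : ζ i = w2.get ⟨i, hi2⟩ := hζ ⟨i, hi2⟩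
  rw [e3, ← e2, e1]

lemma isPiSystem_cyl : IsPiSystem {C : Set (ℕ → X) | ∃ w : List X, C = cylinder w} := by
  rintro C1 ⟨w1, rfl⟩ C2 ⟨w2, rfl⟩ hne
  rcases le_total w1.length w2.length with h | h
  · rw [cylinder_inter_of_le h hne]
    exact ⟨w2, rfl⟩
  · rw [Set.inter_comm] at hne ⊢
    rw [cylinder_inter_of_le h hne]
    exact ⟨w1, rfl⟩

lemma measure_eq_of_cylinder (μ ν : Measure (ℕ → X)) [IsFiniteMeasure μ]
    (h : ∀ w : List X, μ (cylinder w) = ν (cylinder w)) : μ = ν :=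
  ext_of_generate_finite _ pi_eq_gen isPiSystem_cyl (by rintro s ⟨w, rfl⟩; exact h w)
    (by rw [← cylinder_nil]; exact h [])

end cyl
section aut
variable {πf : S → X → S} {lam : S → X → X}

def scons (x : X) (ω : ℕ → X) : ℕ → X
  | 0 => x
  | (n + 1) => ω n

lemma scons_zero (x : X) (ω : ℕ → X) : scons x ω 0 = x := rfl
lemma scons_succ (x : X) (ω : ℕ → X) (n : ℕ) : scons x ω (n + 1) = ω n := rfl

lemma scons_eta (ω : ℕ → X) : scons (ω 0) (fun n => ω (n + 1)) = ω := by
  funext n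
  cases n <;> rfl

lemma autAct_zero (s : S) (ω : ℕ → X) : autAct πf lam s ω 0 = lam s (ω 0) := by
  simp [autAct, List.ofFn_zero, piExt]

lemma autAct_scons (s : S) (x : X) (ω : ℕ → X) :
    autAct πf lam s (scons x ω) = scons (lam s x) (autAct πf lam (πf s x) ω) := by
  funext n
  cases n with
  | zero => simp [autAct, List.ofFn_zero, piExt, scons]
  | succ n =>
    show lam (piExt πf s (List.ofFn fun i : Fin (n + 1) => scons x ω i)) (scons x ω (n + 1))
        = lam (piExt πf (πf s x) (List.ofFn fun i : Fin n => ω i)) (ω n)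
    rw [scons_succ]
    have hst : piExt πf s (List.ofFn fun i : Fin (n + 1) => scons x ω i)
        = piExt πf (πf s x) (List.ofFn fun i : Fin n => ω i) := by
      rw [List.ofFn_succ]
      show piExt πf (πf s (scons x ω 0)) (List.ofFn fun i : Fin n => scons x ω i.succ)
          = piExt πf (πf s x) (List.ofFn fun i : Fin n => ω i)
      rw [scons_zero]
      simp only [Fin.val_succ, scons_succ]
    rw [hst]

lemma tail_eq_of_scons_eq {x y : X} {ω ζ : ℕ → X} (h : scons x ω = scons y ζ) : ω = ζ := by
  funext n
  have := congrFun h (n + 1)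
  rwa [scons_succ, scons_succ] at this

lemma bij_lam_of_bij [Finite X] {s : S} (hs : Function.Bijective (autAct πf lam s)) :
    Function.Bijective (lam s) := by
  rw [← Finite.surjective_iff_bijective]
  intro y
  obtain ⟨ω, hω⟩ := hs.2 (fun _ => y)
  exact ⟨ω 0, by have := congrFun hω 0; rwa [autAct_zero] at this⟩

lemma bij_step [Finite X] {s : S} (hs : Function.Bijective (autAct πf lam s)) (x : X) :
    Function.Bijective (autAct πf lam (πf s x)) := by
  have hlam := bij_lam_of_bij hs
  constructor
  · intro ω₁ ω₂ h
    have h2 : autAct πf lam s (scons x ω₁) = autAct πf lam s (scons x ω₂) := by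
      rw [autAct_scons, autAct_scons, h]
    exact tail_eq_of_scons_eq (hs.1 h2)
  · intro ζ
    obtain ⟨ω, hω⟩ := hs.2 (scons (lam s x) ζ)
    have h0 : lam s (ω 0) = lam s x := by
      have := congrFun hω 0
      rwa [autAct_zero, scons_zero] at this
    have hx : ω 0 = x := hlam.1 h0
    refine ⟨fun n => ω (n + 1), ?_⟩
    have h1 : autAct πf lam s (scons (ω 0) fun n => ω (n + 1)) = scons (lam s x) ζ := by
      rw [scons_eta]
      exact hω
    rw [hx, autAct_scons] at h1
    exact tail_eq_of_scons_eq h1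

lemma bij_piExt [Finite X] : ∀ (w : List X) (s : S),
    Function.Bijective (autAct πf lam s) → Function.Bijective (autAct πf lam (piExt πf s w))
  | [], s, hs => hs
  | (x :: w), s, hs => bij_piExt w (πf s x) (bij_step hs x)

lemma preimage_cylinder (hbij : ∀ r, Function.Injective (lam r)) :
    ∀ (v : List X) (s : S),
      autAct πf lam s ⁻¹' cylinder (lamExt πf lam s v) = cylinder v
  | [], s => by
      rw [lamExt, cylinder_nil, Set.preimage_univ]
  | (x :: v), s => by
      ext ω
      rw [Set.mem_preimage, lamExt, mem_cylinder_cons, mem_cylinder_cons]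
      have hdec : autAct πf lam s ω
          = scons (lam s (ω 0)) (autAct πf lam (πf s (ω 0)) (fun n => ω (n + 1))) := by
        conv_lhs => rw [← scons_eta ω, autAct_scons]
      rw [hdec, scons_zero]
      have htail : (fun n => scons (lam s (ω 0))
          (autAct πf lam (πf s (ω 0)) (fun n => ω (n + 1))) (n + 1))
          = autAct πf lam (πf s (ω 0)) (fun n => ω (n + 1)) := rfl
      rw [htail]
      constructor
      · rintro ⟨h0, ht⟩
        have hx : ω 0 = x := hbij s h0
        rw [hx] at ht
        have := (preimage_cylinder hbij v (πf s x)) ▸ (Set.mem_preimage.mpr ht)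
        exact ⟨hx, this⟩
      · rintro ⟨h0, ht⟩
        have hmem : autAct πf lam (πf s x) (fun n => ω (n + 1))
            ∈ cylinder (lamExt πf lam (πf s x) v) :=
          Set.mem_preimage.mp ((preimage_cylinder hbij v (πf s x)).symm ▸ ht)
        rw [h0]
        exact ⟨rfl, hmem⟩

def lamExtF (πf : S → X → S) (lam : S → X → X) : S → ∀ n : ℕ, (Fin n → X) → (Fin n → X)
  | _, 0, _ => fun i => i.elim0
  | s, (n + 1), f => Fin.cons (lam s (f 0)) (lamExtF πf lam (πf s (f 0)) n (Fin.tail f))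

lemma lamExtF_zero {n : ℕ} (s : S) (f : Fin (n + 1) → X) :
    lamExtF πf lam s (n + 1) f 0 = lam s (f 0) := rfl

lemma lamExtF_succ {n : ℕ} (s : S) (f : Fin (n + 1) → X) (i : Fin n) :
    lamExtF πf lam s (n + 1) f i.succ = lamExtF πf lam (πf s (f 0)) n (Fin.tail f) i :=
  Fin.cons_succ _ _ i

lemma ofFn_tail {n : ℕ} (f : Fin (n + 1) → X) :
    List.ofFn (Fin.tail f) = List.ofFn (fun i : Fin n => f i.succ) := rfl

lemma ofFn_lamExtF : ∀ (n : ℕ) (s : S) (f : Fin n → X),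
    List.ofFn (lamExtF πf lam s n f) = lamExt πf lam s (List.ofFn f)
  | 0, _, _ => by simp [List.ofFn_zero, lamExt]
  | (n + 1), s, f => by
      rw [List.ofFn_succ, List.ofFn_succ (f := f)]
      show (lamExtF πf lam s (n+1) f 0)
            :: List.ofFn (fun i : Fin n => lamExtF πf lam s (n+1) f i.succ)
          = lam s (f 0) :: lamExt πf lam (πf s (f 0)) (List.ofFn fun i : Fin n => f i.succ)
      have h1 : (fun i : Fin n => lamExtF πf lam s (n + 1) f i.succ)
          = lamExtF πf lam (πf s (f 0)) n (Fin.tail f) := by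
        funext i
        exact lamExtF_succ s f i
      rw [lamExtF_zero, h1, ofFn_lamExtF n (πf s (f 0)) (Fin.tail f), ofFn_tail]

lemma lamExtF_injective (hbij : ∀ r, Function.Injective (lam r)) :
    ∀ (n : ℕ) (s : S), Function.Injective (lamExtF πf lam s n)
  | 0, s => fun f f' _ => by
      funext i
      exact i.elim0
  | (n + 1), s => fun f f' h => by
      have h0 : lam s (f 0) = lam s (f' 0) := by
        have h2 := congrFun h 0
        rwa [lamExtF_zero, lamExtF_zero] at h2
      have hf0 : f 0 = f' 0 := hbij s h0
      have htail : lamExtF πf lam (πf s (f 0)) n (Fin.tail f)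
          = lamExtF πf lam (πf s (f' 0)) n (Fin.tail f') := by
        funext i
        have h2 := congrFun h i.succ
        rwa [lamExtF_succ, lamExtF_succ] at h2
      rw [← hf0] at htail
      have := lamExtF_injective hbij n (πf s (f 0)) htail
      funext i
      rcases Fin.eq_zero_or_eq_succ i with rfl | ⟨j, rfl⟩
      · exact hf0
      · have := congrFun this j
        simpa [Fin.tail] using this

lemma lamExtF_bijective [Finite X] (hbij : ∀ r, Function.Injective (lam r)) (n : ℕ) (s : S) :
    Function.Bijective (lamExtF πf lam s n) :=
  Finite.injective_iff_bijective.mp (lamExtF_injective hbij n s)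

end aut
section eqcase
variable [Fintype X] [Fintype S] [DecidableEq S] [Nonempty X]
  {L : X → X → ℝ≥0∞} {l : X → ℝ≥0∞} {πf : S → X → S} {lam : S → X → X} {k : S → ℝ≥0∞}

lemma lam_preserves_l
    (hstat : ∀ y, ∑ x, l x * L x y = l y) (hl1 : ∑ x, l x = 1)
    (hirr : IrreducibleMat L)
    (hbij : ∀ s, Function.Bijective (lam s))
    (hkpos : ∀ s, k s ≠ 0) (hk1 : ∑ s, k s = 1)
    (hstar : ∀ (s' : S) (x' : X),
      (∑ s : S, ∑ x : X, if πf s x = s' then k s * l x * L x x' else 0) = k s' * l x')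
    (hPeq : ∀ s x x', L (lam s x) (lam (πf s x) x') = L x x') :
    ∀ s x, l (lam s x) = l x := by
  classical
  set es : S → X ≃ X := fun s => Equiv.ofBijective _ (hbij s) with hes
  have hes_apply : ∀ s x, es s x = lam s x := fun s x => rfl
  set m' : X → ℝ≥0∞ := fun y => ∑ s, k s * l ((es s).symm y) with hm'
  have hktop : ∀ s, k s ≠ ∞ := ne_top_of_sum_one hk1
  have hltop : ∀ x, l x ≠ ∞ := ne_top_of_sum_one hl1
  -- m' is a probability vector
  have hm'1 : ∑ y, m' y = 1 := by
    rw [hm', Finset.sum_comm]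
    calc ∑ s, ∑ y, k s * l ((es s).symm y)
        = ∑ s, k s * ∑ y, l ((es s).symm y) := by simp [Finset.mul_sum]
      _ = ∑ s, k s * ∑ x, l x := by
          refine Finset.sum_congr rfl fun s _ => ?_
          rw [Equiv.sum_comp (es s).symm l]
      _ = 1 := by rw [hl1]; simpa using hk1
  -- m' is stationary
  have hm'stat : ∀ y', ∑ y, m' y * L y y' = m' y' := by
    intro y'
    calc ∑ y, m' y * L y y'
        = ∑ y, ∑ s, k s * l ((es s).symm y) * L y y' := by
          simp [hm', Finset.sum_mul]
      _ = ∑ s, ∑ y, k s * l ((es s).symm y) * L y y' := Finset.sum_comm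
      _ = ∑ s, ∑ x, k s * l x * L (lam s x) y' := by
          refine Finset.sum_congr rfl fun s _ => ?_
          rw [← Equiv.sum_comp (es s) (fun y => k s * l ((es s).symm y) * L y y')]
          simp [← hes_apply, Equiv.symm_apply_apply]
      _ = ∑ s, ∑ x, k s * l x * L x ((es (πf s x)).symm y') := by
          refine Finset.sum_congr rfl fun s _ => Finset.sum_congr rfl fun x _ => ?_
          congr 1
          have h1 := hPeq s x ((es (πf s x)).symm y')
          have h2 : lam (πf s x) ((es (πf s x)).symm y') = y' :=
            (es (πf s x)).apply_symm_apply y'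
          rw [← h1, h2]
      _ = ∑ s, ∑ x, ∑ s', if πf s x = s' then k s * l x * L x ((es s').symm y') else 0 := by
          refine Finset.sum_congr rfl fun s _ => Finset.sum_congr rfl fun x _ => ?_
          rw [Finset.sum_ite_eq Finset.univ (πf s x)
            (fun s' => k s * l x * L x ((es s').symm y'))]
          simp
      _ = ∑ s, ∑ s', ∑ x, if πf s x = s' then k s * l x * L x ((es s').symm y') else 0 :=
          Finset.sum_congr rfl fun s _ => Finset.sum_comm
      _ = ∑ s', ∑ s, ∑ x, if πf s x = s' then k s * l x * L x ((es s').symm y') else 0 :=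
          Finset.sum_comm
      _ = ∑ s', k s' * l ((es s').symm y') := by
          refine Finset.sum_congr rfl fun s' _ => hstar s' ((es s').symm y')
      _ = m' y' := rfl
  have hm'l : m' = l := stationary_unique hstat hl1 hirr hm'stat hm'1
  -- the key identity
  have hkey : ∑ s, k s * (∑ x, l x * l (lam s x)) = ∑ y, l y * l y := by
    calc ∑ s, k s * (∑ x, l x * l (lam s x))
        = ∑ s, k s * (∑ y, l ((es s).symm y) * l y) := by
          refine Finset.sum_congr rfl fun s _ => ?_
          congr 1
          rw [← Equiv.sum_comp (es s).symm (fun x => l x * l (lam s x))]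
          refine Finset.sum_congr rfl fun y _ => ?_
          rw [← hes_apply, Equiv.apply_symm_apply]
      _ = ∑ s, ∑ y, k s * l ((es s).symm y) * l y := by
          refine Finset.sum_congr rfl fun s _ => ?_
          rw [Finset.mul_sum]
          exact Finset.sum_congr rfl fun y _ => (mul_assoc _ _ _).symm
      _ = ∑ y, ∑ s, k s * l ((es s).symm y) * l y := Finset.sum_comm
      _ = ∑ y, (∑ s, k s * l ((es s).symm y)) * l y :=
          Finset.sum_congr rfl fun y _ => (Finset.sum_mul _ _ _).symm
      _ = ∑ y, l y * l y := by
          refine Finset.sum_congr rfl fun y _ => ?_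
          rw [show (∑ s, k s * l ((es s).symm y)) = m' y from rfl, hm'l]
  -- per-state doubled bound
  have hper : ∀ s, 2 * (∑ x, l x * l (lam s x)) ≤ 2 * ∑ y, l y * l y := by
    intro s
    calc 2 * (∑ x, l x * l (lam s x)) = ∑ x, 2 * (l x * l (lam s x)) := by
          rw [Finset.mul_sum]
      _ ≤ ∑ x, (l x * l x + l (lam s x) * l (lam s x)) :=
          Finset.sum_le_sum fun x _ => two_mul_le_sq_add_sq _ _
      _ = (∑ x, l x * l x) + ∑ x, l (lam s x) * l (lam s x) := Finset.sum_add_distrib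
      _ = (∑ x, l x * l x) + ∑ y, l y * l y := by
          congr 1
          rw [← Equiv.sum_comp (es s) (fun y => l y * l y)]
          simp [hes_apply]
      _ = 2 * ∑ y, l y * l y := (two_mul _).symm
  -- conclusion
  intro s₀ x₀
  by_contra hne
  -- strict bound at (s₀, x₀), with explicit gap
  have hstrict : 2 * (l x₀ * l (lam s₀ x₀)) < l x₀ * l x₀ + l (lam s₀ x₀) * l (lam s₀ x₀) :=
    two_mul_lt_sq_add_sq (fun h => hne h.symm) (hltop x₀) (hltop _)
  set ε : ℝ≥0∞ := (l x₀ * l x₀ + l (lam s₀ x₀) * l (lam s₀ x₀)) - 2 * (l x₀ * l (lam s₀ x₀))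
    with hε
  have hε0 : ε ≠ 0 := by
    rw [hε]
    simpa [tsub_eq_zero_iff_le] using not_le_of_gt hstrict
  have hεsum : 2 * (l x₀ * l (lam s₀ x₀)) + ε
      = l x₀ * l x₀ + l (lam s₀ x₀) * l (lam s₀ x₀) := add_tsub_cancel_of_le hstrict.le
  have hs₀bound : 2 * (∑ x, l x * l (lam s₀ x)) + ε ≤ 2 * ∑ y, l y * l y := by
    calc 2 * (∑ x, l x * l (lam s₀ x)) + ε
        = (∑ x ∈ Finset.univ.erase x₀, 2 * (l x * l (lam s₀ x)))
            + (2 * (l x₀ * l (lam s₀ x₀)) + ε) := by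
          rw [Finset.mul_sum, ← Finset.sum_erase_add _ _ (Finset.mem_univ x₀), add_assoc]
      _ ≤ (∑ x ∈ Finset.univ.erase x₀, (l x * l x + l (lam s₀ x) * l (lam s₀ x)))
            + (l x₀ * l x₀ + l (lam s₀ x₀) * l (lam s₀ x₀)) := by
          rw [hεsum]
          exact add_le_add_left (Finset.sum_le_sum fun x _ => two_mul_le_sq_add_sq _ _) _
      _ = ∑ x, (l x * l x + l (lam s₀ x) * l (lam s₀ x)) :=
          Finset.sum_erase_add _ _ (Finset.mem_univ x₀)
      _ = 2 * ∑ y, l y * l y := by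
          rw [Finset.sum_add_distrib, two_mul]
          congr 1
          rw [← Equiv.sum_comp (es s₀) (fun y => l y * l y)]
          simp [hes_apply]
  -- divide inequalities by 2
  have hcancel2 : ∀ a b : ℝ≥0∞, 2 * a ≤ 2 * b → a ≤ b := by
    intro a b h
    rw [mul_comm 2 a, mul_comm 2 b] at h
    exact (ENNReal.mul_le_mul_iff_left (by norm_num) (by norm_num)).mp h
  set Q : ℝ≥0∞ := ∑ y, l y * l y with hQ
  have hQtop : Q ≠ ∞ := by
    have hle : Q ≤ 1 := by
      rw [hQ, ← hl1]
      exact Finset.sum_le_sum fun y _ =>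
        mul_le_of_le_one_right (zero_le) (le_one_of_sum_one hl1 y)
    intro h
    rw [h] at hle
    simp at hle
  have hinner : ∀ s, (∑ x, l x * l (lam s x)) ≤ Q := fun s => hcancel2 _ _ (hper s)
  have hεtop : ε ≠ ∞ := by
    have hle : ε ≤ l x₀ * l x₀ + l (lam s₀ x₀) * l (lam s₀ x₀) := hε ▸ tsub_le_self
    intro h
    rw [h, top_le_iff] at hle
    exact (ENNReal.add_ne_top.mpr ⟨ENNReal.mul_ne_top (hltop _) (hltop _),
      ENNReal.mul_ne_top (hltop _) (hltop _)⟩) hle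
  have hhalf : (∑ x, l x * l (lam s₀ x)) + ε / 2 ≤ Q := by
    apply hcancel2
    have hexp : 2 * ((∑ x, l x * l (lam s₀ x)) + ε / 2)
        = 2 * (∑ x, l x * l (lam s₀ x)) + ε := by
      rw [mul_add]
      congr 1
      rw [mul_comm, ENNReal.div_mul_cancel (by norm_num) (by norm_num)]
    rw [hexp]
    exact hs₀bound
  have hδ0 : ε / 2 ≠ 0 := by
    simp [ENNReal.div_eq_zero_iff, hε0]
  have hbig : Q + k s₀ * (ε / 2) ≤ Q := by
    have hsplit : (∑ s, k s * (∑ x, l x * l (lam s x))) + k s₀ * (ε / 2)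
        = (∑ s ∈ Finset.univ.erase s₀, k s * (∑ x, l x * l (lam s x)))
          + k s₀ * ((∑ x, l x * l (lam s₀ x)) + ε / 2) := by
      rw [← Finset.sum_erase_add _ _ (Finset.mem_univ s₀), add_assoc, mul_add]
    calc Q + k s₀ * (ε / 2) = (∑ s, k s * (∑ x, l x * l (lam s x))) + k s₀ * (ε / 2) := by
          rw [hkey]
      _ = (∑ s ∈ Finset.univ.erase s₀, k s * (∑ x, l x * l (lam s x)))
          + k s₀ * ((∑ x, l x * l (lam s₀ x)) + ε / 2) := hsplit
      _ ≤ (∑ s ∈ Finset.univ.erase s₀, k s * Q) + k s₀ * Q := by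
          refine add_le_add (Finset.sum_le_sum fun s _ => mul_le_mul_right (hinner s) _)
            (mul_le_mul_right hhalf _)
      _ = (∑ s, k s * Q) := Finset.sum_erase_add _ _ (Finset.mem_univ s₀)
      _ = Q := by rw [← Finset.sum_mul, hk1, one_mul]
  have hlt : Q < Q + k s₀ * (ε / 2) :=
    ENNReal.lt_add_right hQtop (mul_ne_zero (hkpos s₀) hδ0)
  exact absurd hbig (not_le_of_gt hlt)

end eqcase
section hell
variable [Fintype X] [Fintype S]

noncomputable def Rfun (L : X → X → ℝ≥0∞) (πf : S → X → S) (lam : S → X → X) :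
    ℕ → S × X → ℝ≥0∞
  | 0, _ => 1
  | (m + 1), z => ∑ x', sqE (L z.2 x' * L (lam z.1 z.2) (lam (πf z.1 z.2) x'))
      * Rfun L πf lam m (πf z.1 z.2, x')

variable {L : X → X → ℝ≥0∞} {πf : S → X → S} {lam : S → X → X}

lemma image_row_sum_one (hL : ∀ x, ∑ y, L x y = 1)
    (hbij : ∀ r, Function.Bijective (lam r)) (u : X) (r : S) :
    ∑ x', L u (lam r x') = 1 := by
  rw [(hbij r).sum_comp (fun y => L u y)]
  exact hL u

lemma fac_row_le_one (hL : ∀ x, ∑ y, L x y = 1)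
    (hbij : ∀ r, Function.Bijective (lam r)) (s : S) (x : X) :
    ∑ x', sqE (L x x' * L (lam s x) (lam (πf s x) x')) ≤ 1 :=
  sum_sqE_le_one (hL x) (image_row_sum_one hL hbij (lam s x) (πf s x))

lemma Rfun_le_one (hL : ∀ x, ∑ y, L x y = 1)
    (hbij : ∀ r, Function.Bijective (lam r)) :
    ∀ (m : ℕ) (z : S × X), Rfun L πf lam m z ≤ 1
  | 0, _ => le_rfl
  | (m + 1), z => by
      rw [Rfun]
      calc ∑ x', sqE (L z.2 x' * L (lam z.1 z.2) (lam (πf z.1 z.2) x'))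
            * Rfun L πf lam m (πf z.1 z.2, x')
          ≤ ∑ x', sqE (L z.2 x' * L (lam z.1 z.2) (lam (πf z.1 z.2) x')) := by
            refine Finset.sum_le_sum fun x' _ => ?_
            exact mul_le_of_le_one_right (zero_le) (Rfun_le_one hL hbij m _)
        _ ≤ 1 := fac_row_le_one hL hbij z.1 z.2

lemma Rfun_succ_le (hL : ∀ x, ∑ y, L x y = 1)
    (hbij : ∀ r, Function.Bijective (lam r)) :
    ∀ (m : ℕ) (z : S × X), Rfun L πf lam (m + 1) z ≤ Rfun L πf lam m z
  | 0, z => Rfun_le_one hL hbij 1 z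
  | (m + 1), z => by
      rw [Rfun, Rfun]
      exact Finset.sum_le_sum fun x' _ =>
        mul_le_mul_right (Rfun_succ_le hL hbij m _) _

lemma Rfun_anti (hL : ∀ x, ∑ y, L x y = 1)
    (hbij : ∀ r, Function.Bijective (lam r)) {m n : ℕ} (h : m ≤ n) (z : S × X) :
    Rfun L πf lam n z ≤ Rfun L πf lam m z := by
  induction n with
  | zero => rw [Nat.le_zero.mp h]
  | succ n ih =>
      rcases Nat.lt_or_ge m (n + 1) with h' | h'
      · exact le_trans (Rfun_succ_le hL hbij n z) (ih (Nat.lt_succ_iff.mp h'))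
      · rw [le_antisymm h h']

noncomputable def Bnd (L : X → X → ℝ≥0∞) (πf : S → X → S) (lam : S → X → X) (n : ℕ) : ℝ≥0∞ :=
  Finset.univ.sup (Rfun L πf lam n)

lemma Rfun_le_Bnd (n : ℕ) (z : S × X) : Rfun L πf lam n z ≤ Bnd L πf lam n :=
  Finset.le_sup (Finset.mem_univ z)

lemma Rfun_split (hL : ∀ x, ∑ y, L x y = 1)
    (hbij : ∀ r, Function.Bijective (lam r)) :
    ∀ (a n : ℕ) (z : S × X), Rfun L πf lam (a + n) z ≤ Rfun L πf lam a z * Bnd L πf lam n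
  | 0, n, z => by
      rw [Nat.zero_add, Rfun, one_mul]
      exact Rfun_le_Bnd n z
  | (a + 1), n, z => by
      have hshape : a + 1 + n = (a + n) + 1 := by omega
      rw [hshape, Rfun, Rfun]
      calc ∑ x', sqE (L z.2 x' * L (lam z.1 z.2) (lam (πf z.1 z.2) x'))
            * Rfun L πf lam (a + n) (πf z.1 z.2, x')
          ≤ ∑ x', sqE (L z.2 x' * L (lam z.1 z.2) (lam (πf z.1 z.2) x'))
            * (Rfun L πf lam a (πf z.1 z.2, x') * Bnd L πf lam n) := by
            refine Finset.sum_le_sum fun x' _ => ?_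
            exact mul_le_mul_right (Rfun_split hL hbij a n _) _
        _ = (∑ x', sqE (L z.2 x' * L (lam z.1 z.2) (lam (πf z.1 z.2) x'))
            * Rfun L πf lam a (πf z.1 z.2, x')) * Bnd L πf lam n := by
            rw [Finset.sum_mul]
            exact Finset.sum_congr rfl fun x' _ => (mul_assoc _ _ _).symm

/-- One bad row yields a uniform deficiency after one step. -/
lemma Rfun_bad (hL : ∀ x, ∑ y, L x y = 1)
    (hbij : ∀ r, Function.Bijective (lam r)) {s : S} {x : X}
    (h : ¬ ∀ x', L (lam s x) (lam (πf s x) x') = L x x') (m : ℕ) :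
    ∃ δ : ℝ≥0∞, δ ≠ 0 ∧ Rfun L πf lam (m + 1) (s, x) + δ ≤ 1 := by
  push_neg at h
  obtain ⟨c, hc⟩ := h
  obtain ⟨δ, hδ0, hδ⟩ := row_defect (hL x)
    (image_row_sum_one hL hbij (lam s x) (πf s x)) (fun hcontra => hc hcontra.symm)
  refine ⟨δ, hδ0, ?_⟩
  calc Rfun L πf lam (m + 1) (s, x) + δ
      ≤ (∑ x', sqE (L x x' * L (lam s x) (lam (πf s x) x'))) + δ := by
        refine add_le_add_left ?_ δ
        rw [Rfun]
        exact Finset.sum_le_sum fun x' _ =>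
          mul_le_of_le_one_right (zero_le) (Rfun_le_one hL hbij m _)
    _ ≤ 1 := hδ

set_option maxHeartbeats 1000000 in
lemma Rfun_defect (hL : ∀ x, ∑ y, L x y = 1)
    (hbij : ∀ r, Function.Bijective (lam r)) {sstar : S} {xstar : X} {δ₀ : ℝ≥0∞}
    (hδ₀ : δ₀ ≠ 0) (hdef : Rfun L πf lam 1 (sstar, xstar) + δ₀ ≤ 1) :
    ∀ (u : List X) (s : S) (x : X), piExt πf s (x :: u) = sstar →
      chainWeight L x (u ++ [xstar]) ≠ 0 →
      ∃ δ : ℝ≥0∞, δ ≠ 0 ∧ Rfun L πf lam (u.length + 2) (s, x) + δ ≤ 1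
  | [], s, x, hπ, hchain => by
      classical
      by_cases hrow : ∀ x', L (lam s x) (lam (πf s x) x') = L x x'
      · have hπ' : πf s x = sstar := hπ
        have hLxs : L x xstar ≠ 0 := by
          rw [List.nil_append, chainWeight, chainWeight, mul_one] at hchain
          exact hchain
        refine ⟨L x xstar * δ₀, mul_ne_zero hLxs hδ₀, ?_⟩
        have hfac : ∀ x', sqE (L x x' * L (lam s x) (lam (πf s x) x')) = L x x' := by
          intro x'
          rw [hrow x', sqE_sq]
        calc Rfun L πf lam 2 (s, x) + L x xstar * δ₀
            = (∑ x', L x x' * Rfun L πf lam 1 (πf s x, x')) + L x xstar * δ₀ := by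
              rw [Rfun]
              congr 1
              exact Finset.sum_congr rfl fun x' _ => by rw [hfac]
          _ = (∑ x' ∈ Finset.univ.erase xstar, L x x' * Rfun L πf lam 1 (πf s x, x'))
              + (L x xstar * Rfun L πf lam 1 (πf s x, xstar) + L x xstar * δ₀) := by
              rw [← Finset.sum_erase_add _ _ (Finset.mem_univ xstar), add_assoc]
          _ = (∑ x' ∈ Finset.univ.erase xstar, L x x' * Rfun L πf lam 1 (πf s x, x'))
              + L x xstar * (Rfun L πf lam 1 (sstar, xstar) + δ₀) := by
              rw [mul_add, hπ']
          _ ≤ (∑ x' ∈ Finset.univ.erase xstar, L x x') + L x xstar * 1 := by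
              refine add_le_add (Finset.sum_le_sum fun x' _ =>
                mul_le_of_le_one_right (zero_le) (Rfun_le_one hL hbij 1 _))
                (mul_le_mul_right hdef _)
          _ = ∑ x', L x x' := by rw [mul_one, Finset.sum_erase_add _ _ (Finset.mem_univ xstar)]
          _ = 1 := hL x
      · exact Rfun_bad hL hbij hrow 1
  | (a :: u'), s, x, hπ, hchain => by
      classical
      by_cases hrow : ∀ x', L (lam s x) (lam (πf s x) x') = L x x'
      · have hπ' : piExt πf (πf s x) (a :: u') = sstar := hπ
        rw [List.cons_append, chainWeight] at hchain
        have hLxa : L x a ≠ 0 := fun h => hchain (by rw [h, zero_mul])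
        have hchain' : chainWeight L a (u' ++ [xstar]) ≠ 0 :=
          fun h => hchain (by rw [h, mul_zero])
        obtain ⟨δ', hδ'0, hδ'⟩ := Rfun_defect hL hbij hδ₀ hdef u' (πf s x) a hπ' hchain'
        refine ⟨L x a * δ', mul_ne_zero hLxa hδ'0, ?_⟩
        have hfac : ∀ x', sqE (L x x' * L (lam s x) (lam (πf s x) x')) = L x x' := by
          intro x'
          rw [hrow x', sqE_sq]
        have hlen : (a :: u').length + 2 = (u'.length + 2) + 1 := by
          simp [List.length_cons]
        rw [hlen]
        calc Rfun L πf lam ((u'.length + 2) + 1) (s, x) + L x a * δ'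
            = (∑ x', L x x' * Rfun L πf lam (u'.length + 2) (πf s x, x')) + L x a * δ' := by
              rw [Rfun]
              congr 1
              exact Finset.sum_congr rfl fun x' _ => by rw [hfac]
          _ = (∑ x' ∈ Finset.univ.erase a, L x x' * Rfun L πf lam (u'.length + 2) (πf s x, x'))
              + (L x a * Rfun L πf lam (u'.length + 2) (πf s x, a) + L x a * δ') := by
              rw [← Finset.sum_erase_add _ _ (Finset.mem_univ a), add_assoc]
          _ = (∑ x' ∈ Finset.univ.erase a, L x x' * Rfun L πf lam (u'.length + 2) (πf s x, x'))
              + L x a * (Rfun L πf lam (u'.length + 2) (πf s x, a) + δ') := by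
              rw [mul_add]
          _ ≤ (∑ x' ∈ Finset.univ.erase a, L x x') + L x a * 1 := by
              refine add_le_add (Finset.sum_le_sum fun x' _ =>
                mul_le_of_le_one_right (zero_le) (Rfun_le_one hL hbij _ _))
                (mul_le_mul_right hδ' _)
          _ = ∑ x', L x x' := by rw [mul_one, Finset.sum_erase_add _ _ (Finset.mem_univ a)]
          _ = 1 := hL x
      · have hlen : (a :: u').length + 2 = (u'.length + 2) + 1 := by
          simp [List.length_cons]
        rw [hlen]
        exact Rfun_bad hL hbij hrow (u'.length + 2)

end hell
section bc
variable [MeasurableSpace X]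

lemma mutually_singular_of_sets {μ ν : Measure (ℕ → X)}
    {A : ℕ → Set (ℕ → X)} (hAm : ∀ j, MeasurableSet (A j)) {θ : ℝ≥0∞} (hθ : θ < 1)
    (hμA : ∀ j, μ (A j) ≤ θ ^ j) (hνA : ∀ j, ν ((A j)ᶜ) ≤ θ ^ j) :
    μ.MutuallySingular ν := by
  refine ⟨limsup A atTop, MeasurableSet.measurableSet_limsup hAm, ?_, ?_⟩
  · apply measure_limsup_atTop_eq_zero
    have hle : ∑' j, μ (A j) ≤ ∑' j, θ ^ j := ENNReal.tsum_le_tsum hμA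
    rw [ENNReal.tsum_geometric] at hle
    intro h
    rw [h, top_le_iff] at hle
    have h1θ : (1 : ℝ≥0∞) - θ ≠ 0 := (tsub_pos_of_lt hθ).ne'
    exact (ENNReal.inv_ne_top.mpr h1θ) hle
  · have hcompl : (limsup A atTop)ᶜ = ⋃ j, ⋂ i, ⋂ (_ : j ≤ i), (A i)ᶜ := by
      rw [limsup_eq_iInf_iSup_of_nat]
      simp [Set.compl_iInter, Set.compl_iUnion]
    rw [hcompl]
    apply measure_iUnion_null
    intro j
    have hbound : ∀ i, j ≤ i → ν (⋂ i, ⋂ (_ : j ≤ i), (A i)ᶜ) ≤ θ ^ i := by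
      intro i hi
      exact le_trans (measure_mono (Set.iInter₂_subset i hi)) (hνA i)
    have htend : Tendsto (fun i : ℕ => θ ^ i) atTop (𝓝 0) :=
      ENNReal.tendsto_pow_atTop_nhds_zero_of_lt_one hθ
    have : ν (⋂ i, ⋂ (_ : j ≤ i), (A i)ᶜ) ≤ 0 :=
      ge_of_tendsto htend (eventually_atTop.mpr ⟨j, fun i hi => hbound i hi⟩)
    exact le_antisymm this (zero_le)

end bc

/-! ### Remaining bridge lemmas -/

lemma min_le_sqE (a b : ℝ≥0∞) : min a b ≤ sqE (a * b) := by
  have h : min a b * min a b ≤ a * b := mul_le_mul' (min_le_left a b) (min_le_right a b)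
  calc min a b = sqE (min a b * min a b) := (sqE_sq _).symm
    _ ≤ sqE (a * b) := sqE_mono h

lemma ofFn_cons {n : ℕ} (x : X) (f : Fin n → X) :
    List.ofFn (Fin.cons x f : Fin (n + 1) → X) = x :: List.ofFn f := by
  simp [List.ofFn_succ]

section bridge
variable {L : X → X → ℝ≥0∞} {l : X → ℝ≥0∞} {πf : S → X → S} {lam : S → X → X}

lemma chain_preserved (hPeq : ∀ s x x', L (lam s x) (lam (πf s x) x') = L x x') :
    ∀ (v : List X) (s : S) (x : X),
      chainWeight L (lam s x) (lamExt πf lam (πf s x) v) = chainWeight L x v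
  | [], _, _ => rfl
  | (x' :: v), s, x => by
      rw [lamExt, chainWeight, chainWeight, hPeq s x x',
        chain_preserved hPeq v (πf s x) x']

lemma cylWeight_preserved (hPeq : ∀ s x x', L (lam s x) (lam (πf s x) x') = L x x')
    (hlaml : ∀ s x, l (lam s x) = l x) :
    ∀ (v : List X) (s : S), cylWeight l L (lamExt πf lam s v) = cylWeight l L v
  | [], _ => rfl
  | (x :: v), s => by
      rw [lamExt, cylWeight, cylWeight, hlaml s x, chain_preserved hPeq v s x]

variable [Fintype X] [Fintype S]

lemma sum_fin_zero (F : (Fin 0 → X) → ℝ≥0∞) :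
    ∑ f : Fin 0 → X, F f = F (fun i => i.elim0) := by
  rw [Fintype.sum_unique]
  exact congrArg F (Subsingleton.elim _ _)

lemma sum_sqE_eq_Rfun :
    ∀ (m : ℕ) (s : S) (x : X),
      (∑ f : Fin m → X, sqE (chainWeight L x (List.ofFn f)
        * chainWeight L (lam s x) (lamExt πf lam (πf s x) (List.ofFn f))))
      = Rfun L πf lam m (s, x)
  | 0, s, x => by
      rw [sum_fin_zero]
      simp [List.ofFn_zero, chainWeight, lamExt, Rfun, sqE_one]
  | (m + 1), s, x => by
      rw [← Equiv.sum_comp (Fin.consEquiv (fun _ : Fin (m + 1) => X))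
        (fun f => sqE (chainWeight L x (List.ofFn f)
          * chainWeight L (lam s x) (lamExt πf lam (πf s x) (List.ofFn f)))),
        Fintype.sum_prod_type]
      have hterm : ∀ (x' : X) (f' : Fin m → X),
          sqE (chainWeight L x (List.ofFn (Fin.cons x' f' : Fin (m + 1) → X))
            * chainWeight L (lam s x)
              (lamExt πf lam (πf s x) (List.ofFn (Fin.cons x' f' : Fin (m + 1) → X))))
          = sqE (L x x' * L (lam s x) (lam (πf s x) x'))
            * sqE (chainWeight L x' (List.ofFn f')
              * chainWeight L (lam (πf s x) x')
                (lamExt πf lam (πf (πf s x) x') (List.ofFn f'))) := by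
        intro x' f'
        rw [ofFn_cons, chainWeight, lamExt, chainWeight, ← sqE_mul]
        congr 1
        ring
      calc ∑ x', ∑ f' : Fin m → X,
            sqE (chainWeight L x (List.ofFn ((Fin.consEquiv fun _ : Fin (m+1) => X) (x', f')))
              * chainWeight L (lam s x)
                (lamExt πf lam (πf s x) (List.ofFn ((Fin.consEquiv fun _ : Fin (m+1) => X) (x', f')))))
          = ∑ x', ∑ f' : Fin m → X,
            sqE (L x x' * L (lam s x) (lam (πf s x) x'))
              * sqE (chainWeight L x' (List.ofFn f')
                * chainWeight L (lam (πf s x) x')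
                  (lamExt πf lam (πf (πf s x) x') (List.ofFn f'))) := by
            refine Finset.sum_congr rfl fun x' _ => Finset.sum_congr rfl fun f' _ => ?_
            exact hterm x' f'
        _ = ∑ x', sqE (L x x' * L (lam s x) (lam (πf s x) x'))
              * Rfun L πf lam m (πf s x, x') := by
            refine Finset.sum_congr rfl fun x' _ => ?_
            rw [← Finset.mul_sum, sum_sqE_eq_Rfun m (πf s x) x']
        _ = Rfun L πf lam (m + 1) (s, x) := by rw [Rfun]

lemma sum_sqE_cyl_le (hL : ∀ x, ∑ y, L x y = 1) (hl1 : ∑ x, l x = 1)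
    (hbij : ∀ r, Function.Bijective (lam r)) (g : S) (m : ℕ) :
    (∑ f : Fin (m + 1) → X, sqE (cylWeight l L (List.ofFn f)
      * cylWeight l L (lamExt πf lam g (List.ofFn f)))) ≤ Bnd L πf lam m := by
  rw [← Equiv.sum_comp (Fin.consEquiv (fun _ : Fin (m + 1) => X))
    (fun f => sqE (cylWeight l L (List.ofFn f)
      * cylWeight l L (lamExt πf lam g (List.ofFn f)))), Fintype.sum_prod_type]
  have hterm : ∀ (x : X) (f' : Fin m → X),
      sqE (cylWeight l L (List.ofFn (Fin.cons x f' : Fin (m + 1) → X))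
        * cylWeight l L (lamExt πf lam g (List.ofFn (Fin.cons x f' : Fin (m + 1) → X))))
      = sqE (l x * l (lam g x))
        * sqE (chainWeight L x (List.ofFn f')
          * chainWeight L (lam g x) (lamExt πf lam (πf g x) (List.ofFn f'))) := by
    intro x f'
    rw [ofFn_cons, cylWeight, lamExt, cylWeight, ← sqE_mul]
    congr 1
    ring
  calc ∑ x, ∑ f' : Fin m → X,
        sqE (cylWeight l L (List.ofFn ((Fin.consEquiv fun _ : Fin (m+1) => X) (x, f')))
          * cylWeight l L (lamExt πf lam g (List.ofFn ((Fin.consEquiv fun _ : Fin (m+1) => X) (x, f')))))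
      = ∑ x, sqE (l x * l (lam g x)) * Rfun L πf lam m (g, x) := by
        refine Finset.sum_congr rfl fun x _ => ?_
        calc ∑ f' : Fin m → X,
              sqE (cylWeight l L (List.ofFn ((Fin.consEquiv fun _ : Fin (m+1) => X) (x, f')))
                * cylWeight l L (lamExt πf lam g
                    (List.ofFn ((Fin.consEquiv fun _ : Fin (m+1) => X) (x, f')))))
            = ∑ f' : Fin m → X, sqE (l x * l (lam g x))
                * sqE (chainWeight L x (List.ofFn f')
                  * chainWeight L (lam g x) (lamExt πf lam (πf g x) (List.ofFn f'))) :=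
              Finset.sum_congr rfl fun f' _ => hterm x f'
          _ = sqE (l x * l (lam g x)) * Rfun L πf lam m (g, x) := by
              rw [← Finset.mul_sum, sum_sqE_eq_Rfun m g x]
    _ ≤ ∑ x, sqE (l x * l (lam g x)) * Bnd L πf lam m := by
        refine Finset.sum_le_sum fun x _ => mul_le_mul_right (Rfun_le_Bnd m (g, x)) _
    _ = (∑ x, sqE (l x * l (lam g x))) * Bnd L πf lam m := (Finset.sum_mul _ _ _).symm
    _ ≤ 1 * Bnd L πf lam m := by
        refine mul_le_mul_left ?_ _
        refine sum_sqE_le_one hl1 ?_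
        rw [(hbij g).sum_comp l]
        exact hl1
    _ = Bnd L πf lam m := one_mul _

lemma exists_geom (hL : ∀ x, ∑ y, L x y = 1)
    (hbij : ∀ r, Function.Bijective (lam r)) (hconn : LStronglyConnected πf L)
    (hbad : ∃ s x x', L (lam s x) (lam (πf s x) x') ≠ L x x') :
    ∃ (M : ℕ) (θ : ℝ≥0∞), θ < 1 ∧ ∀ j : ℕ, Bnd L πf lam (M * j) ≤ θ ^ j := by
  obtain ⟨sx, xx, xx', hne⟩ := hbad
  obtain ⟨δ₀, hδ₀0, hδ₀⟩ := row_defect (hL xx)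
    (image_row_sum_one hL hbij (lam sx xx) (πf sx xx)) (c := xx') (fun h => hne h.symm)
  have hdef : Rfun L πf lam 1 (sx, xx) + δ₀ ≤ 1 := by
    have hR1 : Rfun L πf lam 1 (sx, xx)
        = ∑ x', sqE (L xx x' * L (lam sx xx) (lam (πf sx xx) x')) := by
      rw [Rfun]
      exact Finset.sum_congr rfl fun x' _ => by rw [Rfun, mul_one]
    rw [hR1]
    exact hδ₀
  have hz : ∀ z : S × X, ∃ m : ℕ, Rfun L πf lam m z < 1 := by
    intro z
    obtain ⟨w, hw1, hw2⟩ := hconn z.1 sx z.2 xx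
    obtain ⟨δ, hδne, hle⟩ := Rfun_defect hL hbij hδ₀0 hdef w z.1 z.2 hw1 hw2
    refine ⟨w.length + 2, ?_⟩
    have h1 : Rfun L πf lam (w.length + 2) (z.1, z.2)
        < Rfun L πf lam (w.length + 2) (z.1, z.2) + δ := by
      refine ENNReal.lt_add_right ?_ hδne
      intro h
      have := Rfun_le_one (πf := πf) hL hbij (w.length + 2) (z.1, z.2)
      rw [h] at this
      simp at this
    exact lt_of_lt_of_le h1 hle
  choose mf hmf using hz
  set M := Finset.univ.sup mf with hM
  refine ⟨M, Bnd L πf lam M, ?_, ?_⟩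
  · rw [Bnd]
    rw [Finset.sup_lt_iff (by norm_num : (⊥ : ℝ≥0∞) < 1)]
    intro z _
    exact lt_of_le_of_lt
      (Rfun_anti hL hbij (Finset.le_sup (Finset.mem_univ z)) z) (hmf z)
  · intro j
    induction j with
    | zero =>
        rw [Nat.mul_zero, pow_zero, Bnd]
        exact Finset.sup_le fun z _ => Rfun_le_one hL hbij 0 z
    | succ j ih =>
        have hsplit : M * (j + 1) = M + M * j := by ring
        rw [hsplit, pow_succ, Bnd]
        refine Finset.sup_le fun z _ => ?_
        calc Rfun L πf lam (M + M * j) z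
            ≤ Rfun L πf lam M z * Bnd L πf lam (M * j) := Rfun_split hL hbij M (M * j) z
          _ ≤ Bnd L πf lam M * Bnd L πf lam M ^ j :=
              mul_le_mul' (Rfun_le_Bnd M z) ih
          _ = Bnd L πf lam M ^ j * Bnd L πf lam M := mul_comm _ _

end bridge

theorem stmt16 [Fintype X] [Fintype S] [DecidableEq S]
    [MeasurableSpace X] [MeasurableSingletonClass X]
    (L : X → X → ℝ≥0∞) (l : X → ℝ≥0∞)
    (hL : ∀ x, ∑ y : X, L x y = 1) (hl1 : ∑ x : X, l x = 1)
    (hstat : ∀ y, ∑ x : X, l x * L x y = l y)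
    (hirr : IrreducibleMat L)
    (μ : Measure (ℕ → X)) (hμ : ∀ w : List X, μ (cylinder w) = cylWeight l L w)
    (πf : S → X → S) (lam : S → X → X) (g : S)
    (hconn : LStronglyConnected πf L)
    (hinv : Function.Bijective (autAct πf lam g))
    (hmeas : Measurable (autAct πf lam g))
    (t : S × X → ℝ≥0∞) (ht1 : ∑ p : S × X, t p = 1)
    (htstat : ∀ q : S × X, ∑ p : S × X, t p * Tmat πf L p q = t q)
    (k : S → ℝ≥0∞) (hk1 : ∑ s : S, k s = 1)
    (hkstat : ∀ s₁ : S, ∑ s₀ : S, k s₀ * Kmat πf l s₀ s₁ = k s₁)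
    (htensor : ∀ p : S × X, t p = k p.1 * l p.2) :
    Measure.MutuallySingular μ (Measure.map (autAct πf lam g) μ) ∨
      Measure.map (autAct πf lam g) μ = μ := by
  classical
  have hXne : Nonempty X := by
    by_contra h
    rw [not_nonempty_iff] at h
    rw [Finset.univ_eq_empty, Finset.sum_empty] at hl1
    exact zero_ne_one hl1
  have hcylnil : μ Set.univ = 1 := by
    rw [← cylinder_nil, hμ []]
    rfl
  haveI : IsFiniteMeasure μ := ⟨by rw [hcylnil]; exact ENNReal.one_lt_top⟩
  have hbijlam : ∀ r : S, Function.Bijective (lam r) := by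
    intro r
    obtain ⟨x⟩ := hXne
    obtain ⟨w, hw, -⟩ := hconn g r x x
    rw [← hw]
    exact bij_lam_of_bij (bij_piExt (x :: w) g hinv)
  have hbijInj : ∀ r : S, Function.Injective (lam r) := fun r => (hbijlam r).1
  have hlpos : ∀ x, l x ≠ 0 := stat_pos hstat hl1 hirr
  by_cases hPeq : ∀ s x x', L (lam s x) (lam (πf s x) x') = L x x'
  · right
    -- positivity of k
    have hkstep : ∀ s x, k s * l x ≤ k (πf s x) := by
      intro s x
      have h1 : l x ≤ Kmat πf l s (πf s x) := by
        rw [Kmat]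
        calc l x = if πf s x = πf s x then l x else 0 := by rw [if_pos rfl]
          _ ≤ ∑ x', if πf s x' = πf s x then l x' else 0 :=
            Finset.single_le_sum (f := fun x' => if πf s x' = πf s x then l x' else 0)
              (fun _ _ => zero_le) (Finset.mem_univ x)
      calc k s * l x ≤ k s * Kmat πf l s (πf s x) := mul_le_mul_right h1 _
        _ ≤ ∑ s₀, k s₀ * Kmat πf l s₀ (πf s x) :=
          Finset.single_le_sum (f := fun s₀ => k s₀ * Kmat πf l s₀ (πf s x))
            (fun _ _ => zero_le) (Finset.mem_univ s)
        _ = k (πf s x) := hkstat (πf s x)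
    have hkext : ∀ (w : List X) (s : S), k s ≠ 0 → k (piExt πf s w) ≠ 0 := by
      intro w
      induction w with
      | nil => exact fun s h => h
      | cons x w ih =>
          intro s h
          refine ih (πf s x) ?_
          intro h0
          have h1 := hkstep s x
          rw [h0, le_zero_iff] at h1
          exact (mul_ne_zero h (hlpos x)) h1
    have hkpos : ∀ s, k s ≠ 0 := by
      have hkex : ∃ s, k s ≠ 0 := by
        by_contra h
        push_neg at h
        rw [Finset.sum_eq_zero (fun s _ => h s)] at hk1
        exact zero_ne_one hk1
      intro s
      obtain ⟨s₀, hs₀⟩ := hkex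
      obtain ⟨x⟩ := hXne
      obtain ⟨w, hw, -⟩ := hconn s₀ s x x
      have := hkext (x :: w) s₀ hs₀
      rwa [hw] at this
    -- the stationarity identity for k ⊗ l
    have hstar : ∀ (s' : S) (x' : X),
        (∑ s : S, ∑ x : X, if πf s x = s' then k s * l x * L x x' else 0) = k s' * l x' := by
      intro s' x'
      have h1 := htstat (s', x')
      rw [Fintype.sum_prod_type] at h1
      calc ∑ s : S, ∑ x : X, (if πf s x = s' then k s * l x * L x x' else 0)
          = ∑ s : S, ∑ x : X, t (s, x) * Tmat πf L (s, x) (s', x') := by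
            refine Finset.sum_congr rfl fun s _ => Finset.sum_congr rfl fun x _ => ?_
            rw [htensor (s, x)]
            show (if πf s x = s' then k s * l x * L x x' else 0)
              = k s * l x * (if πf s x = s' then L x x' else 0)
            by_cases hc : πf s x = s'
            · rw [if_pos hc, if_pos hc]
            · rw [if_neg hc, if_neg hc, mul_zero]
        _ = t (s', x') := h1
        _ = k s' * l x' := htensor (s', x')
    haveI := hXne
    have hlaml : ∀ s x, l (lam s x) = l x :=
      lam_preserves_l hstat hl1 hirr hbijlam hkpos hk1 hstar hPeq
    haveI : IsFiniteMeasure (Measure.map (autAct πf lam g) μ) :=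
      ⟨by
        rw [Measure.map_apply hmeas MeasurableSet.univ, Set.preimage_univ, hcylnil]
        exact ENNReal.one_lt_top⟩
    apply measure_eq_of_cylinder
    intro w
    obtain ⟨f₀, hf₀⟩ := (lamExtF_bijective hbijInj w.length g).2 (fun i => w.get i)
    have hv : lamExt πf lam g (List.ofFn f₀) = w := by
      rw [← ofFn_lamExtF, hf₀, List.ofFn_get]
    rw [Measure.map_apply hmeas (measurableSet_cylinder w), ← hv,
      preimage_cylinder hbijInj (List.ofFn f₀) g, hμ, hμ,
      cylWeight_preserved hPeq hlaml (List.ofFn f₀) g]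
  · left
    push_neg at hPeq
    obtain ⟨s₁, x₁, x₂, hbadne⟩ := hPeq
    obtain ⟨M, θ, hθ, hBnd⟩ := exists_geom hL hbijlam hconn ⟨s₁, x₁, x₂, hbadne⟩
    set ν : Measure (ℕ → X) := Measure.map (autAct πf lam g) μ with hνdef
    have hν_cyl : ∀ (n : ℕ) (f : Fin n → X),
        ν (cylinder (List.ofFn (lamExtF πf lam g n f))) = cylWeight l L (List.ofFn f) := by
      intro n f
      rw [hνdef, Measure.map_apply hmeas (measurableSet_cylinder _), ofFn_lamExtF,
        preimage_cylinder hbijInj (List.ofFn f) g, hμ]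
    have hsum_eq : ∀ n : ℕ,
        (∑ f : Fin n → X, sqE (μ (cylinder (List.ofFn f)) * ν (cylinder (List.ofFn f))))
        = ∑ f : Fin n → X, sqE (cylWeight l L (List.ofFn f)
            * cylWeight l L (lamExt πf lam g (List.ofFn f))) := by
      intro n
      rw [← Equiv.sum_comp (Equiv.ofBijective _ (lamExtF_bijective hbijInj n g))
        (fun f => sqE (μ (cylinder (List.ofFn f)) * ν (cylinder (List.ofFn f))))]
      refine Finset.sum_congr rfl fun f _ => ?_
      simp only [Equiv.ofBijective_apply]
      rw [hν_cyl n f, hμ, ofFn_lamExtF, mul_comm]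
    have hHell : ∀ j : ℕ,
        (∑ f : Fin (M * j + 1) → X,
          sqE (μ (cylinder (List.ofFn f)) * ν (cylinder (List.ofFn f)))) ≤ θ ^ j := by
      intro j
      rw [hsum_eq]
      exact le_trans (sum_sqE_cyl_le hL hl1 hbijlam g (M * j)) (hBnd j)
    set A : ℕ → Set (ℕ → X) := fun j =>
      ⋃ f ∈ Finset.univ.filter (fun f : Fin (M * j + 1) → X =>
        μ (cylinder (List.ofFn f)) ≤ ν (cylinder (List.ofFn f))),
          cylinder (List.ofFn f) with hAdef
    have hAm : ∀ j, MeasurableSet (A j) :=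
      fun j => Finset.measurableSet_biUnion _ (fun f _ => measurableSet_cylinder _)
    have hμA : ∀ j, μ (A j) ≤ θ ^ j := by
      intro j
      refine le_trans ?_ (hHell j)
      calc μ (A j)
          ≤ ∑ f ∈ Finset.univ.filter (fun f : Fin (M * j + 1) → X =>
              μ (cylinder (List.ofFn f)) ≤ ν (cylinder (List.ofFn f))),
            μ (cylinder (List.ofFn f)) := measure_biUnion_finset_le _ _
        _ ≤ ∑ f ∈ Finset.univ.filter (fun f : Fin (M * j + 1) → X =>
              μ (cylinder (List.ofFn f)) ≤ ν (cylinder (List.ofFn f))),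
            sqE (μ (cylinder (List.ofFn f)) * ν (cylinder (List.ofFn f))) := by
            refine Finset.sum_le_sum fun f hf => ?_
            have hle := (Finset.mem_filter.mp hf).2
            calc μ (cylinder (List.ofFn f))
                = min (μ (cylinder (List.ofFn f))) (ν (cylinder (List.ofFn f))) :=
                  (min_eq_left hle).symm
              _ ≤ sqE (μ (cylinder (List.ofFn f)) * ν (cylinder (List.ofFn f))) :=
                  min_le_sqE _ _
        _ ≤ ∑ f : Fin (M * j + 1) → X,
              sqE (μ (cylinder (List.ofFn f)) * ν (cylinder (List.ofFn f))) :=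
            Finset.sum_le_sum_of_subset (Finset.filter_subset _ _)
    have hνA : ∀ j, ν ((A j)ᶜ) ≤ θ ^ j := by
      intro j
      refine le_trans ?_ (hHell j)
      have hsub : (A j)ᶜ ⊆ ⋃ f ∈ Finset.univ.filter (fun f : Fin (M * j + 1) → X =>
          ¬ (μ (cylinder (List.ofFn f)) ≤ ν (cylinder (List.ofFn f)))),
            cylinder (List.ofFn f) := by
        intro ω hω
        have hself : ω ∈ cylinder (List.ofFn (fun i : Fin (M * j + 1) => ω i)) :=
          (mem_cylinder_ofFn _ _ ω).mpr (fun _ => rfl)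
        by_cases hP : μ (cylinder (List.ofFn (fun i : Fin (M * j + 1) => ω i)))
            ≤ ν (cylinder (List.ofFn (fun i : Fin (M * j + 1) => ω i)))
        · exact absurd (show ω ∈ A j from Set.mem_biUnion
            (Finset.mem_filter.mpr ⟨Finset.mem_univ _, hP⟩) hself) hω
        · exact Set.mem_biUnion (Finset.mem_filter.mpr ⟨Finset.mem_univ _, hP⟩) hself
      calc ν ((A j)ᶜ)
          ≤ ν (⋃ f ∈ Finset.univ.filter (fun f : Fin (M * j + 1) → X =>
              ¬ (μ (cylinder (List.ofFn f)) ≤ ν (cylinder (List.ofFn f)))),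
            cylinder (List.ofFn f)) := measure_mono hsub
        _ ≤ ∑ f ∈ Finset.univ.filter (fun f : Fin (M * j + 1) → X =>
              ¬ (μ (cylinder (List.ofFn f)) ≤ ν (cylinder (List.ofFn f)))),
            ν (cylinder (List.ofFn f)) := measure_biUnion_finset_le _ _
        _ ≤ ∑ f ∈ Finset.univ.filter (fun f : Fin (M * j + 1) → X =>
              ¬ (μ (cylinder (List.ofFn f)) ≤ ν (cylinder (List.ofFn f)))),
            sqE (μ (cylinder (List.ofFn f)) * ν (cylinder (List.ofFn f))) := by
            refine Finset.sum_le_sum fun f hf => ?_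
            have hle := (Finset.mem_filter.mp hf).2
            calc ν (cylinder (List.ofFn f))
                = min (μ (cylinder (List.ofFn f))) (ν (cylinder (List.ofFn f))) :=
                  (min_eq_right (not_le.mp hle).le).symm
              _ ≤ sqE (μ (cylinder (List.ofFn f)) * ν (cylinder (List.ofFn f))) :=
                  min_le_sqE _ _
        _ ≤ ∑ f : Fin (M * j + 1) → X,
              sqE (μ (cylinder (List.ofFn f)) * ν (cylinder (List.ofFn f))) :=
            Finset.sum_le_sum_of_subset (Finset.filter_subset _ _)
    exact mutually_singular_of_sets hAm hθ hμA hνA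

end AutoMarkov
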